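/- Let s : A → B and t : A → C be functors of small categories and V a bicomplete category. For the cocomma square, with D = B ↑_A C the cocomma category, inclusions f : B → D and g : C → D, and the canonical natural transformation f ∘ s ⟹ g ∘ t, the base change natural transformation t_! s^* ⟹ g^* f_! is a natural isomorphism of functors Fun(B, V) → Fun(C, V). -/

import Mathlib

/-!
A mixed morphism `b ⟶ c` of `B ↑_A C` is a class of words `b ⟶ s a, t a ⟶ c` modulo the
relation generated by morphisms of `A`. These words are precisely the objects of the category of
factorizations of the morphism through the square, and the generating relations are its
morphisms; so that category is connected, i.e. the cocomma square is Guitart exact. Base change of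
left Kan extensions along a Guitart exact square is invertible.
-/

open CategoryTheory CategoryTheory.Limits
universe v w u

section BaseChange
variable {A B C D : Type u} [SmallCategory A] [SmallCategory B] [SmallCategory C] [SmallCategory D]
variable (V : Type v) [Category.{w} V] [HasColimitsOfSize.{u,u} V]

/-- The transformation `f^* ⋙ s^* ⟶ g^* ⋙ t^*` induced by `α : s ⋙ f ⟶ t ⋙ g`. -/
def restrictionSquare (s : A ⥤ B) (t : A ⥤ C) (f : B ⥤ D) (g : C ⥤ D) (α : s ⋙ f ⟶ t ⋙ g) :
    ((Functor.whiskeringLeft B D V).obj f ⋙ (Functor.whiskeringLeft A B V).obj s : (D ⥤ V) ⥤ (A ⥤ V)) ⟶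
      (Functor.whiskeringLeft C D V).obj g ⋙ (Functor.whiskeringLeft A C V).obj t where
  app H := Functor.whiskerRight α H
  naturality := by intros; ext; simp

/-- The base change natural transformation `t_! s^* ⟶ g^* f_!` of a lax square,
defined as the composite `t_! s^* ⟶ t_! s^* f^* f_! ⟶ t_! t^* g^* f_! ⟶ g^* f_!`
using the unit of `f_! ⊣ f^*` and the counit of `t_! ⊣ t^*`. -/
noncomputable def baseChange (s : A ⥤ B) (t : A ⥤ C) (f : B ⥤ D) (g : C ⥤ D)
    (α : s ⋙ f ⟶ t ⋙ g) :
    ((Functor.whiskeringLeft A B V).obj s ⋙ t.lan : (B ⥤ V) ⥤ (C ⥤ V)) ⟶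
      f.lan ⋙ (Functor.whiskeringLeft C D V).obj g :=
  Functor.whiskerRight (f.lanAdjunction V).unit ((Functor.whiskeringLeft A B V).obj s ⋙ t.lan) ≫
    Functor.whiskerRight (Functor.whiskerLeft f.lan (restrictionSquare V s t f g α)) t.lan ≫
    Functor.whiskerLeft (f.lan ⋙ (Functor.whiskeringLeft C D V).obj g) (t.lanAdjunction V).counit

end BaseChange
variable {A B C : Type u} [SmallCategory A] [SmallCategory B] [SmallCategory C]

/-- A word `b ⟶ s(a) ⟶ t(a) ⟶ c` representing a morphism of the cocomma category. -/
structure CocommaWord (s : A ⥤ B) (t : A ⥤ C) (b : B) (c : C) : Type u where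
  pt : A
  l : b ⟶ s.obj pt
  r : t.obj pt ⟶ c

/-- The relation on words generated by morphisms of `A`. -/
inductive CocommaRel (s : A ⥤ B) (t : A ⥤ C) (b : B) (c : C) :
    CocommaWord s t b c → CocommaWord s t b c → Prop
  | mk {a a' : A} (θ : a ⟶ a') (φ : b ⟶ s.obj a) (ψ : t.obj a' ⟶ c) :
      CocommaRel s t b c ⟨a, φ, t.map θ ≫ ψ⟩ ⟨a', φ ≫ s.map θ, ψ⟩

/-- The cocomma (flow sum) category `B ↑_A C`: objects are `Ob B ⊔ Ob C`. -/
def Cocomma (s : A ⥤ B) (t : A ⥤ C) : Type u := B ⊕ C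

variable (s : A ⥤ B) (t : A ⥤ C)

/-- Morphisms of the cocomma category. -/
def CocommaHom : Cocomma s t → Cocomma s t → Type u
  | .inl b, .inl b' => b ⟶ b'
  | .inl b, .inr c => Quot (CocommaRel s t b c)
  | .inr _, .inl _ => PEmpty
  | .inr c, .inr c' => c ⟶ c'

instance : Category.{u} (Cocomma s t) where
  Hom := CocommaHom s t
  id x := match x with
    | .inl b => (𝟙 b : b ⟶ b)
    | .inr c => (𝟙 c : c ⟶ c)
  comp {x y z} F G := match x, y, z, F, G with
    | .inl _, .inl _, .inl _, F, G => (F ≫ G : _ ⟶ _)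
    | .inl _b, .inl _b', .inr _c, F, G =>
        Quot.lift (fun w => Quot.mk _ ⟨w.pt, F ≫ w.l, w.r⟩)
          (by rintro _ _ ⟨θ, φ, ψ⟩; dsimp
              erw [← Category.assoc]
              exact Quot.sound (CocommaRel.mk θ (F ≫ φ) ψ)) G
    | .inl _b, .inr _c, .inr _c', F, G =>
        Quot.lift (fun w => Quot.mk _ ⟨w.pt, w.l, w.r ≫ G⟩)
          (by rintro _ _ ⟨θ, φ, ψ⟩; dsimp
              erw [Category.assoc]
              exact Quot.sound (CocommaRel.mk θ φ (ψ ≫ G))) F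
    | .inr _, .inr _, .inr _, F, G => (F ≫ G : _ ⟶ _)
    | .inr _, .inl _, _, F, _ => F.elim
    | .inl _, .inr _, .inl _, _, G => G.elim
    | .inr _, .inr _, .inl _, _, G => G.elim
  id_comp {x y} F := by
    match x, y, F with
    | .inl _, .inl _, F => exact Category.id_comp F
    | .inl _, .inr _, F =>
        induction F using Quot.ind with
        | _ w => dsimp; rw [Category.id_comp]
    | .inr _, .inl _, F => exact F.elim
    | .inr _, .inr _, F => exact Category.id_comp F
  comp_id {x y} F := by
    match x, y, F with
    | .inl _, .inl _, F => exact Category.comp_id F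
    | .inl _, .inr _, F =>
        induction F using Quot.ind with
        | _ w => dsimp; rw [Category.comp_id]
    | .inr _, .inl _, F => exact F.elim
    | .inr _, .inr _, F => exact Category.comp_id F
  assoc {x y z w} F G H := by
    match x, y, z, w, F, G, H with
    | .inl _, .inl _, .inl _, .inl _, F, G, H => exact Category.assoc F G H
    | .inl _, .inl _, .inl _, .inr _, F, G, H =>
        induction H using Quot.ind with
        | _ w => dsimp; erw [Category.assoc]
    | .inl _, .inl _, .inr _, .inr _, F, G, H =>
        induction G using Quot.ind with
        | _ w => dsimp
    | .inl _, .inr _, .inr _, .inr _, F, G, H =>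
        induction F using Quot.ind with
        | _ w => dsimp; erw [Category.assoc]
    | .inr _, .inr _, .inr _, .inr _, F, G, H => exact Category.assoc F G H
    | .inr _, .inl _, _, _, F, _, _ => exact F.elim
    | .inl _, .inr _, .inl _, _, _, G, _ => exact G.elim
    | .inr _, .inr _, .inl _, _, _, G, _ => exact G.elim
    | _, .inl _, .inr _, .inl _, _, _, H => exact H.elim
    | _, .inr _, .inr _, .inl _, _, _, H => exact H.elim

/-- The inclusion of `B` into the cocomma category. -/
def Cocomma.inlF : B ⥤ Cocomma s t where
  obj b := Sum.inl b
  map φ := φ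
  map_id _ := rfl
  map_comp _ _ := rfl

/-- The inclusion of `C` into the cocomma category. -/
def Cocomma.inrF : C ⥤ Cocomma s t where
  obj c := Sum.inr c
  map φ := φ
  map_id _ := rfl
  map_comp _ _ := rfl

/-- The canonical natural transformation of the cocomma (lax) square. -/
def Cocomma.natTrans : s ⋙ Cocomma.inlF s t ⟶ t ⋙ Cocomma.inrF s t where
  app a := Quot.mk _ ⟨a, 𝟙 _, 𝟙 _⟩
  naturality a a' θ := by
    dsimp [Cocomma.inlF, Cocomma.inrF]
    show Quot.mk _ _ = Quot.mk _ _
    have := Quot.sound (CocommaRel.mk (s := s) (t := t) θ (𝟙 (s.obj a)) (𝟙 (t.obj a')))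
    simpa using this.symm

lemma baseChange_eq_lanBaseChange {A B C D : Type u} [SmallCategory A] [SmallCategory B]
    [SmallCategory C] [SmallCategory D] (V : Type v) [Category.{w} V] [HasColimitsOfSize.{u,u} V]
    (s : A ⥤ B) (t : A ⥤ C) (f : B ⥤ D) (g : C ⥤ D) (α : s ⋙ f ⟶ t ⋙ g) :
    baseChange V s t f g α = TwoSquare.lanBaseChange (.mk _ _ _ _ α) := by
  ext H : 2
  simp only [Functor.comp_obj, Functor.whiskeringLeft_obj_obj, baseChange, Functor.lanAdjunction_unit,
    restrictionSquare, NatTrans.comp_app, Functor.whiskerRight_app, Functor.id_obj, Functor.comp_map,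
    Functor.whiskeringLeft_obj_map, Functor.whiskerLeft_app, TwoSquare.lanBaseChange_app,
    Functor.LeftExtension.mk_hom]
  rw [← Functor.map_comp_assoc]
  congr 2
  ext
  simp only [NatTrans.comp_app, Functor.associator_inv_app, Functor.associator_hom_app,
    Category.comp_id, Category.id_comp]
  rfl

namespace Cocomma

lemma quot_mk_eq_comp {b : B} {c : C} (w : CocommaWord s t b c) :
    (Quot.mk _ w : (inlF s t).obj b ⟶ (inrF s t).obj c) =
      (inlF s t).map w.l ≫ (natTrans s t).app w.pt ≫ (inrF s t).map w.r := by
  obtain ⟨a, φ, ψ⟩ := w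
  change _ = Quot.mk _ (CocommaWord.mk (s := s) (t := t) a (φ ≫ 𝟙 _) (𝟙 _ ≫ ψ))
  simp

abbrev twoSquare : TwoSquare s t (inlF s t) (inrF s t) := natTrans s t

variable {s t}

abbrev structuredArrowRightwardsOfWord {b : B} {c : C} {γ : (inlF s t).obj b ⟶ (inrF s t).obj c}
    (w : CocommaWord s t b c) (hw : Quot.mk _ w = γ) :
    (twoSquare s t).StructuredArrowRightwards γ :=
  TwoSquare.StructuredArrowRightwards.mk _ γ w.pt w.l w.r ((quot_mk_eq_comp s t w).symm.trans hw)

lemma zigzag_structuredArrowRightwardsOfWord {b : B} {c : C}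
    {γ : (inlF s t).obj b ⟶ (inrF s t).obj c} {w w' : CocommaWord s t b c}
    (h : Relation.EqvGen (CocommaRel s t b c) w w') (hw : Quot.mk _ w = γ)
    (hw' : Quot.mk _ w' = γ) :
    Zigzag (structuredArrowRightwardsOfWord w hw) (structuredArrowRightwardsOfWord w' hw') := by
  induction h with
  | rel _ _ h =>
    obtain ⟨θ, φ, ψ⟩ := h
    refine Zigzag.of_hom (StructuredArrow.homMk (CostructuredArrow.homMk θ rfl) ?_)
    ext
    rfl
  | refl => exact Zigzag.refl _
  | symm _ _ _ ih => exact (ih hw' hw).symm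
  | trans _ w'' _ h _ ih ih' =>
    have hw'' : Quot.mk _ w'' = γ := (Quot.eqvGen_sound h).symm.trans hw
    exact (ih hw hw'').trans (ih' hw'' hw')

instance guitartExact : (twoSquare s t).GuitartExact := by
  refine ⟨fun γ => ?_⟩
  obtain ⟨w₀, hw₀⟩ := Quot.exists_rep γ
  have : Nonempty ((twoSquare s t).StructuredArrowRightwards γ) :=
    ⟨structuredArrowRightwardsOfWord w₀ hw₀⟩
  refine zigzag_isConnected fun X Y => ?_
  obtain ⟨a, φ, ψ, hX, rfl⟩ := TwoSquare.StructuredArrowRightwards.mk_surjective X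
  obtain ⟨a', φ', ψ', hY, rfl⟩ := TwoSquare.StructuredArrowRightwards.mk_surjective Y
  have hX' := (quot_mk_eq_comp s t ⟨a, φ, ψ⟩).trans hX
  have hY' := (quot_mk_eq_comp s t ⟨a', φ', ψ'⟩).trans hY
  exact zigzag_structuredArrowRightwardsOfWord (Quot.eqvGen_exact (hX'.trans hY'.symm)) hX' hY'

end Cocomma

theorem baseChange_cocomma_isIso_general
    {A B C : Type u} [SmallCategory A] [SmallCategory B] [SmallCategory C]
    (s : A ⥤ B) (t : A ⥤ C)
    (V : Type v) [Category.{w} V] [HasColimitsOfSize.{u,u} V] :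
    IsIso (baseChange V s t (Cocomma.inlF s t) (Cocomma.inrF s t) (Cocomma.natTrans s t)) := by
  rw [baseChange_eq_lanBaseChange]
  exact inferInstanceAs (IsIso (Cocomma.twoSquare s t).lanBaseChange)

/-- **Base change along a cocomma (flow sum) square is an isomorphism:** for the cocomma
square with inclusions `f : B ⥤ B ↑_A C` and `g : C ⥤ B ↑_A C`, the base change
transformation `t_! s^* ⟶ g^* f_!` is a natural isomorphism. -/
theorem baseChange_cocomma_isIso
    {A B C : Type u} [SmallCategory A] [SmallCategory B] [SmallCategory C]
    (s : A ⥤ B) (t : A ⥤ C)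
    (V : Type v) [Category.{w} V] [HasColimitsOfSize.{u,u} V] [HasLimitsOfSize.{u,u} V] :
    IsIso (baseChange V s t (Cocomma.inlF s t) (Cocomma.inrF s t) (Cocomma.natTrans s t)) :=
  baseChange_cocomma_isIso_general s t V
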